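/- Let M be a minor-minimal non-Rayleigh matroid on a finite ground set, i.e., M is not Rayleigh but every proper minor of M is Rayleigh. Suppose e, f are distinct ground-set elements and y is an assignment of positive real values such that ΔM{e,f}(y) < 0. Then the set {e, f} is closed (a flat) in M. -/

import Mathlib

open MvPolynomial
open scoped Classical

/-- The basis generating polynomial `M_I^J(y)` of the minor of `M` obtained by
contracting `I` and deleting `J`:
`M_I^J(y) = Σ_{B basis of M, I ⊆ B ⊆ E∖J} Π_{e ∈ B∖I} y_e`.
(It is `0` when `I` is dependent.) -/
noncomputable def Matroid.minorPoly {α : Type*} [Fintype α] [DecidableEq α]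
    (M : Matroid α) (I J : Finset α) : MvPolynomial α ℝ :=
  ∑ B ∈ Finset.univ.filter
      (fun B : Finset α => M.IsBase (B : Set α) ∧ I ⊆ B ∧ Disjoint B J),
    ∏ e ∈ B \ I, X e

/-- The Rayleigh difference `ΔM{e,f} = M_e^f · M_f^e − M_{ef} · M^{ef}`. -/
noncomputable def Matroid.rayleighDiff {α : Type*} [Fintype α] [DecidableEq α]
    (M : Matroid α) (e f : α) : MvPolynomial α ℝ :=
  M.minorPoly {e} {f} * M.minorPoly {f} {e} - M.minorPoly {e, f} ∅ * M.minorPoly ∅ {e, f}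

/-- A matroid is Rayleigh if `ΔM{e,f}(y) ≥ 0` for all distinct ground set elements
`e, f` whenever all the variables are positive. -/
def Matroid.IsRayleigh {α : Type*} [Fintype α] [DecidableEq α] (M : Matroid α) : Prop :=
  ∀ e ∈ M.E, ∀ f ∈ M.E, e ≠ f → ∀ y : α → ℝ,
    (∀ c ∈ M.E, 0 < y c) → 0 ≤ eval y (M.rayleighDiff e f)

/-- Deletion of the set `D` from the matroid `M`: restrict to `M.E \ D`. -/
def Matroid.del {α : Type*} (M : Matroid α) (D : Set α) : Matroid α :=
  M.restrict (M.E \ D)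

/-- Contraction of the set `C` in the matroid `M`, defined by duality:
`M ／ C = (M✶ ＼ C)✶`. -/
def Matroid.con {α : Type*} (M : Matroid α) (C : Set α) : Matroid α :=
  (M✶.del C)✶

/-- `N` is a minor of `M` if it is obtained from `M` by a sequence of deletions and
contractions; equivalently, by contracting some set and then deleting some set. -/
def Matroid.IsMinorOf {α : Type*} (N M : Matroid α) : Prop :=
  ∃ C D : Set α, N = (M.con C).del D


namespace RayleighAux
open Finset Set
variable {α : Type*} [Fintype α] [DecidableEq α] {M : Matroid α}

set_option linter.unusedVariables false
set_option linter.unusedSectionVars false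

private lemma eval_minorPoly (M : Matroid α) (I J : Finset α) (y : α → ℝ) :
    eval y (M.minorPoly I J) =
      ∑ B ∈ Finset.univ.filter
        (fun B : Finset α => M.IsBase (B : Set α) ∧ I ⊆ B ∧ Disjoint B J),
        ∏ x ∈ B \ I, y x := by
  rw [Matroid.minorPoly, map_sum]
  exact Finset.sum_congr rfl fun B _ => by rw [map_prod]; simp

private lemma eval_minorPoly_nonneg (M : Matroid α) (I J : Finset α) {y : α → ℝ}
    (hy : ∀ c ∈ M.E, 0 ≤ y c) : 0 ≤ eval y (M.minorPoly I J) := by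
  rw [eval_minorPoly]
  refine Finset.sum_nonneg fun B hB => Finset.prod_nonneg fun x hx => ?_
  rw [Finset.mem_filter] at hB
  exact hy x (hB.2.1.subset_ground (Finset.mem_coe.mpr (Finset.mem_sdiff.mp hx).1))

private lemma minorPoly_eq_zero {I : Finset α} (h : ¬ M.Indep (I : Set α)) (J : Finset α) :
    M.minorPoly I J = 0 := by
  rw [Matroid.minorPoly]
  refine Finset.sum_eq_zero fun B hB => ?_
  rw [Finset.mem_filter] at hB
  exact absurd (hB.2.1.indep.subset (Finset.coe_subset.mpr hB.2.2.1)) h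

private lemma minorPoly_eq_zero_of_forall_mem {g : α} (h : ∀ B : Set α, M.IsBase B → g ∈ B)
    {I J : Finset α} (hgJ : g ∈ J) : M.minorPoly I J = 0 := by
  rw [Matroid.minorPoly]
  refine Finset.sum_eq_zero fun B hB => ?_
  rw [Finset.mem_filter] at hB
  exact absurd (h _ hB.2.1)
    (fun hgB => hB.2.2.2.forall_ne_finset (Finset.mem_coe.mp hgB) hgJ rfl)

private lemma minorPoly_split {g : α} {I J : Finset α} (hgI : g ∉ I) (hgJ : g ∉ J) :
    M.minorPoly I J = M.minorPoly I (insert g J) + X g * M.minorPoly (insert g I) J := by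
  have h1 : (Finset.univ.filter
      (fun B : Finset α => M.IsBase (B : Set α) ∧ I ⊆ B ∧ Disjoint B J)).filter (fun B => g ∉ B)
      = Finset.univ.filter
        (fun B : Finset α => M.IsBase (B : Set α) ∧ I ⊆ B ∧ Disjoint B (insert g J)) := by
    ext B
    simp only [Finset.mem_filter, Finset.mem_univ, true_and, Finset.disjoint_insert_right]
    tauto
  have h2 : (Finset.univ.filter
      (fun B : Finset α => M.IsBase (B : Set α) ∧ I ⊆ B ∧ Disjoint B J)).filter (fun B => ¬ g ∉ B)
      = Finset.univ.filter
        (fun B : Finset α => M.IsBase (B : Set α) ∧ insert g I ⊆ B ∧ Disjoint B J) := by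
    ext B
    simp only [Finset.mem_filter, Finset.mem_univ, true_and, Finset.insert_subset_iff, not_not]
    tauto
  rw [Matroid.minorPoly, ← Finset.sum_filter_add_sum_filter_not _ (fun B => g ∉ B), h1, h2]
  congr 1
  rw [Matroid.minorPoly, Finset.mul_sum]
  refine Finset.sum_congr rfl fun B hB => ?_
  rw [Finset.mem_filter] at hB
  have hgB : g ∈ B \ I := Finset.mem_sdiff.mpr ⟨hB.2.2.1 (Finset.mem_insert_self g I), hgI⟩
  have hset : B \ insert g I = (B \ I).erase g := by
    ext x
    simp only [Finset.mem_erase, Finset.mem_sdiff, Finset.mem_insert]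
    tauto
  rw [hset, ← Finset.mul_prod_erase _ _ hgB]

private lemma not_subset_closure_erase {B : Finset α} {g : α} {X : Set α}
    (hB : M.IsBase (B : Set α)) (hg : g ∈ B) (hgX : g ∈ M.closure X)
    (hX : X ⊆ M.closure ((B.erase g : Finset α) : Set α)) : False := by
  have h1 : M.closure X ⊆ M.closure ((B.erase g : Finset α) : Set α) :=
    Matroid.closure_subset_closure_of_subset_closure hX
  have h2 := hB.indep.notMem_closure_sdiff_of_mem (Finset.mem_coe.mpr hg)
  rw [← Finset.coe_erase] at h2
  exact h2 (h1 hgX)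

private lemma not_indep_insert {g : α} {S : Set α} (hg : g ∈ M.closure S) (hgS : g ∉ S) :
    ¬ M.Indep (insert g S) := fun h =>
  h.notMem_closure_sdiff_of_mem (Set.mem_insert g S)
    (by rwa [Set.insert_sdiff_self_of_notMem hgS])

private lemma exchange_base' {B : Finset α} {g x : α} (hB : M.IsBase (B : Set α)) (hg : g ∈ B)
    (hx : x ∉ B) (hxE : x ∈ M.E)
    (hxcl : x ∉ M.closure ((B.erase g : Finset α) : Set α)) :
    M.IsBase ((insert x (B.erase g) : Finset α) : Set α) := by
  have hIe : M.Indep (((B : Set α)) \ {g}) := hB.indep.subset Set.diff_subset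
  have hind : M.Indep (insert x ((B : Set α) \ {g})) := by
    rw [hIe.insert_indep_iff]
    left
    rw [← Finset.coe_erase]
    exact ⟨hxE, hxcl⟩
  have hbase := hB.exchange_isBase_of_indep (e := g) (f := x) (by simpa using hx) hind
  rw [Finset.coe_insert, Finset.coe_erase]
  exact hbase

private lemma exchange_base {B : Finset α} {g x : α} {X : Set α} (hB : M.IsBase (B : Set α))
    (hg : g ∈ B) (hx : x ∉ B) (hxE : x ∈ M.E) (hgX : g ∈ M.closure X)
    (hX : X ⊆ insert x ((B.erase g : Finset α) : Set α)) :
    M.IsBase ((insert x (B.erase g) : Finset α) : Set α) := by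
  refine exchange_base' hB hg hx hxE fun hmem => ?_
  refine not_subset_closure_erase hB hg hgX (hX.trans ?_)
  refine Set.insert_subset hmem (M.subset_closure _ ?_)
  rw [Finset.coe_erase]
  exact Set.diff_subset.trans hB.subset_ground

private lemma mem_coe_erase {B : Finset α} {w g : α} (hw : w ∈ B) (hwg : w ≠ g) :
    w ∈ ((B.erase g : Finset α) : Set α) :=
  Finset.mem_coe.mpr (Finset.mem_erase.mpr ⟨hwg, hw⟩)

private lemma swap_mem_filter {a b : α} (hab : a ≠ b) {I J : Finset α}
    (haI : a ∉ I) (hbI : b ∉ I) (haJ : a ∉ J) (hbJ : b ∉ J)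
    (hfwd : ∀ B : Finset α, M.IsBase (B : Set α) → a ∈ B → b ∉ B → I ⊆ B →
      M.IsBase ((insert b (B.erase a) : Finset α) : Set α))
    {B : Finset α}
    (hB : B ∈ Finset.univ.filter
      (fun B : Finset α => M.IsBase (B : Set α) ∧ insert a I ⊆ B ∧ Disjoint B (insert b J))) :
    insert b (B.erase a) ∈ Finset.univ.filter
      (fun B : Finset α => M.IsBase (B : Set α) ∧ insert b I ⊆ B ∧ Disjoint B (insert a J)) := by
  rw [Finset.mem_filter] at hB
  obtain ⟨-, hbase, hsub, hdisj⟩ := hB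
  rw [Finset.insert_subset_iff] at hsub
  rw [Finset.disjoint_insert_right] at hdisj
  obtain ⟨haB, hIB⟩ := hsub
  obtain ⟨hbB, hdJ⟩ := hdisj
  rw [Finset.mem_filter]
  refine ⟨Finset.mem_univ _, hfwd B hbase haB hbB hIB, ?_, ?_⟩
  · rw [Finset.insert_subset_iff]
    exact ⟨Finset.mem_insert_self _ _, fun x hx => Finset.mem_insert_of_mem
      (Finset.mem_erase.mpr ⟨fun h => haI (h ▸ hx), hIB hx⟩)⟩
  · rw [Finset.disjoint_insert_right]
    constructor
    · intro h
      rcases Finset.mem_insert.mp h with h | h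
      · exact hab h
      · exact (Finset.mem_erase.mp h).1 rfl
    · rw [Finset.disjoint_insert_left]
      exact ⟨hbJ, Finset.disjoint_of_subset_left (Finset.erase_subset _ _) hdJ⟩

private lemma minorPoly_swap {a b : α} (hab : a ≠ b) {I J : Finset α}
    (haI : a ∉ I) (hbI : b ∉ I) (haJ : a ∉ J) (hbJ : b ∉ J)
    (hfwd : ∀ B : Finset α, M.IsBase (B : Set α) → a ∈ B → b ∉ B → I ⊆ B →
      M.IsBase ((insert b (B.erase a) : Finset α) : Set α))
    (hbwd : ∀ B : Finset α, M.IsBase (B : Set α) → b ∈ B → a ∉ B → I ⊆ B →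
      M.IsBase ((insert a (B.erase b) : Finset α) : Set α)) :
    M.minorPoly (insert a I) (insert b J) = M.minorPoly (insert b I) (insert a J) := by
  rw [Matroid.minorPoly, Matroid.minorPoly]
  refine Finset.sum_bij' (fun B _ => insert b (B.erase a)) (fun B _ => insert a (B.erase b))
    (fun B hB => swap_mem_filter hab haI hbI haJ hbJ hfwd hB)
    (fun B hB => swap_mem_filter hab.symm hbI haI hbJ haJ hbwd hB) ?_ ?_ ?_
  · intro B hB
    rw [Finset.mem_filter] at hB
    have haB : a ∈ B := hB.2.2.1 (Finset.mem_insert_self _ _)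
    have hbB : b ∉ B := Finset.disjoint_insert_right.mp hB.2.2.2 |>.1
    rw [Finset.erase_insert (fun h => hbB (Finset.mem_erase.mp h).2), Finset.insert_erase haB]
  · intro B hB
    rw [Finset.mem_filter] at hB
    have hbB : b ∈ B := hB.2.2.1 (Finset.mem_insert_self _ _)
    have haB : a ∉ B := Finset.disjoint_insert_right.mp hB.2.2.2 |>.1
    rw [Finset.erase_insert (fun h => haB (Finset.mem_erase.mp h).2), Finset.insert_erase hbB]
  · intro B hB
    rw [Finset.mem_filter] at hB
    have haB : a ∈ B := hB.2.2.1 (Finset.mem_insert_self _ _)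
    have hbB : b ∉ B := Finset.disjoint_insert_right.mp hB.2.2.2 |>.1
    have hset : insert b (B.erase a) \ insert b I = B \ insert a I := by
      ext x
      simp only [Finset.mem_sdiff, Finset.mem_insert, Finset.mem_erase]
      constructor
      · rintro ⟨hx1 | ⟨hxa, hxB⟩, hx2⟩
        · exact absurd (Or.inl hx1) hx2
        · exact ⟨hxB, fun h => h.elim (fun h' => absurd h' hxa) (fun hI => hx2 (Or.inr hI))⟩
      · rintro ⟨hxB, hx2⟩
        refine ⟨Or.inr ⟨fun h => hx2 (Or.inl h), hxB⟩, ?_⟩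
        rintro (rfl | hxI)
        · exact hbB hxB
        · exact hx2 (Or.inr hxI)
    rw [hset]

private lemma restrict_base_iff' {g : α} {B0 : Set α} (hB0 : M.IsBase B0) (hgB0 : g ∉ B0)
    {B : Set α} : (M.restrict (M.E \ {g})).IsBase B ↔ M.IsBase B ∧ g ∉ B := by
  rw [Matroid.isBase_restrict_iff Set.diff_subset]
  constructor
  · intro h
    have hcl : M.E ⊆ M.closure (M.E \ {g}) := by
      have h1 : M.closure B0 ⊆ M.closure (M.E \ {g}) :=
        M.closure_subset_closure (Set.subset_diff_singleton hB0.subset_ground hgB0)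
      rw [hB0.closure_eq] at h1
      exact h1
    have hbase : M.IsBase B := h.indep.isBase_of_ground_subset_closure
      (by rw [h.closure_eq_closure]; exact hcl)
    exact ⟨hbase, fun hgB => (h.subset hgB).2 rfl⟩
  · rintro ⟨hb, hgb⟩
    exact hb.indep.isBasis_of_subset_of_subset_closure
      (Set.subset_diff_singleton hb.subset_ground hgb)
      (by rw [hb.closure_eq]; exact Set.diff_subset)

private lemma restrict_minorPoly {g : α} {B0 : Set α} (hB0 : M.IsBase B0) (hgB0 : g ∉ B0)
    (I J : Finset α) :
    (M.restrict (M.E \ {g})).minorPoly I J = M.minorPoly I (insert g J) := by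
  rw [Matroid.minorPoly, Matroid.minorPoly]
  refine Finset.sum_congr ?_ (fun _ _ => rfl)
  ext B
  simp only [Finset.mem_filter, Finset.mem_univ, true_and, Finset.disjoint_insert_right,
    restrict_base_iff' hB0 hgB0, Finset.mem_coe]
  tauto

private lemma half {g x z : α} (hgx : g ≠ x) (hxz : x ≠ z) (hgz : g ≠ z) {y : α → ℝ}
    (hy : ∀ c ∈ M.E, 0 ≤ y c) (S' : Finset (Finset α))
    (hS' : ∀ B ∈ S', M.IsBase (B : Set α) ∧ g ∈ B ∧ x ∉ B ∧ z ∉ B ∧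
      M.IsBase ((insert x (B.erase g) : Finset α) : Set α)) :
    ∑ B ∈ S', ∏ w ∈ B \ ({g} : Finset α), y w ≤
      eval y (M.minorPoly {x} (insert g {z})) := by
  rw [eval_minorPoly]
  have hinj : ∀ B1 ∈ S', ∀ B2 ∈ S',
      insert x (B1.erase g) = insert x (B2.erase g) → B1 = B2 := by
    intro B1 h1 B2 h2 heq
    obtain ⟨-, hg1, hx1, -, -⟩ := hS' B1 h1
    obtain ⟨-, hg2, hx2, -, -⟩ := hS' B2 h2
    have e1 : (insert x (B1.erase g)).erase x = B1.erase g :=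
      Finset.erase_insert (fun h => hx1 (Finset.mem_erase.mp h).2)
    have e2 : (insert x (B2.erase g)).erase x = B2.erase g :=
      Finset.erase_insert (fun h => hx2 (Finset.mem_erase.mp h).2)
    have : B1.erase g = B2.erase g := by rw [← e1, ← e2, heq]
    rw [← Finset.insert_erase hg1, ← Finset.insert_erase hg2, this]
  have hrw : ∑ B ∈ S', ∏ w ∈ B \ ({g} : Finset α), y w
      = ∑ B' ∈ S'.image (fun B => insert x (B.erase g)), ∏ w ∈ B' \ ({x} : Finset α), y w := by
    rw [Finset.sum_image hinj]
    refine Finset.sum_congr rfl fun B hB => ?_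
    obtain ⟨-, hgB, hxB, -, -⟩ := hS' B hB
    have hset : insert x (B.erase g) \ ({x} : Finset α) = B \ ({g} : Finset α) := by
      ext w
      simp only [Finset.mem_sdiff, Finset.mem_insert, Finset.mem_erase,
        Finset.mem_singleton]
      constructor
      · rintro ⟨hx1 | ⟨hwg, hwB⟩, hwx⟩
        · exact absurd hx1 hwx
        · exact ⟨hwB, hwg⟩
      · rintro ⟨hwB, hwg⟩
        exact ⟨Or.inr ⟨hwg, hwB⟩, fun h => hxB (h ▸ hwB)⟩
    rw [hset]
  rw [hrw]
  refine Finset.sum_le_sum_of_subset_of_nonneg ?_ ?_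
  · intro B' hB'
    rw [Finset.mem_image] at hB'
    obtain ⟨B, hB, rfl⟩ := hB'
    obtain ⟨hbase, hgB, hxB, hzB, hbase'⟩ := hS' B hB
    rw [Finset.mem_filter]
    refine ⟨Finset.mem_univ _, hbase', ?_, ?_⟩
    · simpa using Finset.mem_insert_self x (B.erase g)
    · rw [Finset.disjoint_insert_right, Finset.disjoint_singleton_right]
      constructor
      · intro h
        rcases Finset.mem_insert.mp h with h | h
        · exact hgx h
        · exact (Finset.mem_erase.mp h).1 rfl
      · intro h
        rcases Finset.mem_insert.mp h with h | h
        · exact hxz h.symm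
        · exact hzB (Finset.mem_erase.mp h).2
  · intro B' hB' _
    rw [Finset.mem_filter] at hB'
    exact Finset.prod_nonneg fun w hw =>
      hy w (hB'.2.1.subset_ground (Finset.mem_coe.mpr (Finset.mem_sdiff.mp hw).1))

private lemma eval_le_add {e f g : α} (he : e ∈ M.E) (hf : f ∈ M.E) (hef : e ≠ f) (hge : g ≠ e)
    (hgf : g ≠ f) (hcl : g ∈ M.closure {e, f}) {y : α → ℝ} (hy : ∀ c ∈ M.E, 0 ≤ y c) :
    eval y (M.minorPoly {g} {e, f}) ≤
      eval y (M.minorPoly {e} (insert g {f})) + eval y (M.minorPoly {f} (insert g {e})) := by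
  rw [eval_minorPoly]
  rw [← Finset.sum_filter_add_sum_filter_not
    (Finset.univ.filter (fun B : Finset α =>
      M.IsBase (B : Set α) ∧ ({g} : Finset α) ⊆ B ∧ Disjoint B ({e, f} : Finset α)))
    (fun B => M.IsBase ((insert e (B.erase g) : Finset α) : Set α))
    (fun B => ∏ w ∈ B \ ({g} : Finset α), y w)]
  have hmem : ∀ B ∈ Finset.univ.filter (fun B : Finset α =>
      M.IsBase (B : Set α) ∧ ({g} : Finset α) ⊆ B ∧ Disjoint B ({e, f} : Finset α)),
      M.IsBase (B : Set α) ∧ g ∈ B ∧ e ∉ B ∧ f ∉ B := by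
    intro B hB
    rw [Finset.mem_filter] at hB
    obtain ⟨-, hbase, hsub, hdisj⟩ := hB
    rw [Finset.disjoint_insert_right, Finset.disjoint_singleton_right] at hdisj
    exact ⟨hbase, hsub (Finset.mem_singleton_self g), hdisj.1, hdisj.2⟩
  refine add_le_add (half hge hef hgf hy _ ?_) (half hgf hef.symm hge hy _ ?_)
  · intro B hB
    rw [Finset.mem_filter] at hB
    obtain ⟨hbase, hgB, heB, hfB⟩ := hmem B hB.1
    exact ⟨hbase, hgB, heB, hfB, hB.2⟩
  · intro B hB
    rw [Finset.mem_filter] at hB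
    obtain ⟨hbase, hgB, heB, hfB⟩ := hmem B hB.1
    have hecl : e ∈ M.closure ((B.erase g : Finset α) : Set α) := by
      by_contra h'
      exact hB.2 (exchange_base' hbase hgB heB he h')
    have hfn : f ∉ M.closure ((B.erase g : Finset α) : Set α) := by
      intro hfcl
      refine not_subset_closure_erase hbase hgB hcl ?_
      rintro w (rfl | rfl)
      · exact hecl
      · exact hfcl
    exact ⟨hbase, hgB, hfB, heB, exchange_base' hbase hgB hfB hf hfn⟩

end RayleighAux

/-- Let `M` be a minor-minimal non-Rayleigh matroid: `M` is not Rayleigh but every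
proper minor of `M` is Rayleigh. If `e, f` are distinct ground set elements and `y` is
a positive assignment with `ΔM{e,f}(y) < 0`, then `{e, f}` is closed (a flat) in `M`. -/
theorem minor_minimal_non_rayleigh_flat {α : Type*} [Fintype α] [DecidableEq α]
    (M : Matroid α) (hM : ¬ M.IsRayleigh)
    (hmin : ∀ N : Matroid α, N.IsMinorOf M → N ≠ M → N.IsRayleigh)
    (e f : α) (he : e ∈ M.E) (hf : f ∈ M.E) (hef : e ≠ f)
    (y : α → ℝ) (hy : ∀ c ∈ M.E, 0 < y c)
    (hneg : eval y (M.rayleighDiff e f) < 0) :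
    M.IsFlat {e, f} := by
  classical
  have hy' : ∀ c ∈ M.E, 0 ≤ y c := fun c hc => (hy c hc).le
  have hEef : ({e, f} : Set α) ⊆ M.E := by rintro x (rfl | rfl) <;> assumption
  have hclosure : M.closure {e, f} ⊆ {e, f} := by
    intro g hg
    by_contra hgef
    have hge : g ≠ e := fun h => hgef (h ▸ Set.mem_insert e {f})
    have hgf : g ≠ f := fun h => hgef (h ▸ Set.mem_insert_of_mem e rfl)
    have hgE : g ∈ M.E := M.closure_subset_ground _ hg
    -- split the four polynomials
    set A1 := M.minorPoly {e} (insert g {f}) with hA1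
    set B1 := M.minorPoly (insert g {e}) {f} with hB1
    set A2 := M.minorPoly {f} (insert g {e}) with hA2
    set B2 := M.minorPoly (insert g {f}) {e} with hB2
    set A3 := M.minorPoly {e, f} (insert g ∅) with hA3
    set B3 := M.minorPoly (insert g {e, f}) ∅ with hB3def
    set A4 := M.minorPoly ∅ (insert g {e, f}) with hA4
    set B4 := M.minorPoly (insert g ∅) {e, f} with hB4
    have hs1 : M.minorPoly {e} {f} = A1 + X g * B1 :=
      RayleighAux.minorPoly_split (by simp [hge]) (by simp [hgf])
    have hs2 : M.minorPoly {f} {e} = A2 + X g * B2 :=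
      RayleighAux.minorPoly_split (by simp [hgf]) (by simp [hge])
    have hs3 : M.minorPoly {e, f} ∅ = A3 + X g * B3 :=
      RayleighAux.minorPoly_split (by simp [hge, hgf]) (by simp)
    have hs4 : M.minorPoly ∅ {e, f} = A4 + X g * B4 :=
      RayleighAux.minorPoly_split (by simp) (by simp [hge, hgf])
    have hB3 : B3 = 0 := by
      refine RayleighAux.minorPoly_eq_zero ?_ _
      rw [Finset.coe_insert, Finset.coe_insert, Finset.coe_singleton]
      exact RayleighAux.not_indep_insert hg hgef
    have hpoly : M.rayleighDiff e f =
        (A1 * A2 - A3 * A4) + X g * (A1 * B2 + B1 * A2 - A3 * B4)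
          + X g * X g * (B1 * B2) := by
      rw [Matroid.rayleighDiff, hs1, hs2, hs3, hs4, hB3]
      ring
    have hins : (insert g (∅ : Finset α)) = ({g} : Finset α) := by simp
    -- the deleted-minor part is nonnegative
    have ha : 0 ≤ eval y (A1 * A2 - A3 * A4) := by
      by_cases hco : ∀ B : Set α, M.IsBase B → g ∈ B
      · have z1 : A1 = 0 :=
          RayleighAux.minorPoly_eq_zero_of_forall_mem hco (Finset.mem_insert_self g {f})
        have z3 : A3 = 0 :=
          RayleighAux.minorPoly_eq_zero_of_forall_mem hco (Finset.mem_insert_self g ∅)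
        simp [z1, z3]
      · push_neg at hco
        obtain ⟨B0, hB0, hgB0⟩ := hco
        set N := M.restrict (M.E \ {g}) with hN
        have hcon : M.con ∅ = M := by
          rw [Matroid.con, Matroid.del, Set.diff_empty, Matroid.restrict_ground_eq_self,
            Matroid.dual_dual]
        have hminor : N.IsMinorOf M := ⟨∅, {g}, by rw [hcon]; rfl⟩
        have hne : N ≠ M := by
          intro h
          have h2 := congrArg Matroid.E h
          rw [hN, Matroid.restrict_ground_eq] at h2
          have h3 : g ∈ M.E \ {g} := h2.symm ▸ hgE
          exact h3.2 rfl
        have heN : e ∈ N.E := by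
          rw [hN, Matroid.restrict_ground_eq]
          exact ⟨he, fun h => hge (Set.mem_singleton_iff.mp h).symm⟩
        have hfN : f ∈ N.E := by
          rw [hN, Matroid.restrict_ground_eq]
          exact ⟨hf, fun h => hgf (Set.mem_singleton_iff.mp h).symm⟩
        have hyN : ∀ c ∈ N.E, 0 < y c := by
          intro c hc
          rw [hN, Matroid.restrict_ground_eq] at hc
          exact hy c hc.1
        have hNr := hmin N hminor hne e heN f hfN hef y hyN
        have hr1 : N.minorPoly {e} {f} = A1 := RayleighAux.restrict_minorPoly hB0 hgB0 {e} {f}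
        have hr2 : N.minorPoly {f} {e} = A2 := RayleighAux.restrict_minorPoly hB0 hgB0 {f} {e}
        have hr3 : N.minorPoly {e, f} ∅ = A3 := RayleighAux.restrict_minorPoly hB0 hgB0 {e, f} ∅
        have hr4 : N.minorPoly ∅ {e, f} = A4 := RayleighAux.restrict_minorPoly hB0 hgB0 ∅ {e, f}
        have hrd : N.rayleighDiff e f = A1 * A2 - A3 * A4 := by
          rw [Matroid.rayleighDiff, hr1, hr2, hr3, hr4]
        rw [← hrd]
        exact hNr
    -- the linear and quadratic parts are nonnegative
    have hmain : 0 ≤ eval y (A1 * B2 + B1 * A2 - A3 * B4) ∧ 0 ≤ eval y (B1 * B2) := by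
      by_cases hloop : g ∈ M.closure ∅
      · have hIg : ¬ M.Indep ({g} : Set α) := by
          have h1 := RayleighAux.not_indep_insert hloop (Set.notMem_empty g)
          simpa using h1
        have z1 : B1 = 0 := RayleighAux.minorPoly_eq_zero
          (fun h => hIg (h.subset (by simp))) _
        have z2 : B2 = 0 := RayleighAux.minorPoly_eq_zero
          (fun h => hIg (h.subset (by simp))) _
        have z4 : B4 = 0 := RayleighAux.minorPoly_eq_zero
          (fun h => hIg (h.subset (by simp))) _
        constructor
        · simp [z1, z2, z4]
        · simp [z1]
      · by_cases hclE : g ∈ M.closure {e}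
        · -- g is parallel to e
          have hecl : e ∈ M.closure {g} := by
            have h1 := Matroid.mem_closure_insert hloop (by simpa using hclE)
            simpa using h1
          have z1 : B1 = 0 := by
            refine RayleighAux.minorPoly_eq_zero ?_ _
            rw [Finset.coe_insert, Finset.coe_singleton]
            exact RayleighAux.not_indep_insert hclE (by simp [hge])
          have hfwd : ∀ B : Finset α, M.IsBase (B : Set α) → g ∈ B → e ∉ B →
              ∀ hI : True, M.IsBase ((insert e (B.erase g) : Finset α) : Set α) :=
            fun B hb hgB heB _ => RayleighAux.exchange_base hb hgB heB he hclE
              (Set.singleton_subset_iff.mpr (Set.mem_insert _ _))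
          have hbwd : ∀ B : Finset α, M.IsBase (B : Set α) → e ∈ B → g ∉ B →
              ∀ hI : True, M.IsBase ((insert g (B.erase e) : Finset α) : Set α) :=
            fun B hb heB hgB _ => RayleighAux.exchange_base hb heB hgB hgE hecl
              (Set.singleton_subset_iff.mpr (Set.mem_insert _ _))
          have sw2 : B2 = A3 := by
            have h1 := RayleighAux.minorPoly_swap (M := M) (a := g) (b := e)
              (I := ({f} : Finset α)) (J := (∅ : Finset α)) hge (by simp [hgf])
              (by simp [hef]) (by simp) (by simp)
              (fun B hb hgB heB hIB => hfwd B hb hgB heB trivial)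
              (fun B hb heB hgB hIB => hbwd B hb heB hgB trivial)
            rwa [show (insert e (∅ : Finset α)) = ({e} : Finset α) by simp] at h1
          have sw4 : B4 = A1 := by
            have h1 := RayleighAux.minorPoly_swap (M := M) (a := g) (b := e)
              (I := (∅ : Finset α)) (J := ({f} : Finset α)) hge (by simp) (by simp)
              (by simp [hgf]) (by simp [hef])
              (fun B hb hgB heB hIB => hfwd B hb hgB heB trivial)
              (fun B hb heB hgB hIB => hbwd B hb heB hgB trivial)
            rwa [show (insert e (∅ : Finset α)) = ({e} : Finset α) by simp] at h1
          have hz : A1 * B2 + B1 * A2 - A3 * B4 = 0 := by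
            rw [z1, sw2, sw4]; ring
          constructor
          · simp [hz]
          · simp [z1]
        · by_cases hclF : g ∈ M.closure {f}
          · -- g is parallel to f
            have hfcl : f ∈ M.closure {g} := by
              have h1 := Matroid.mem_closure_insert hloop (by simpa using hclF)
              simpa using h1
            have z2 : B2 = 0 := by
              refine RayleighAux.minorPoly_eq_zero ?_ _
              rw [Finset.coe_insert, Finset.coe_singleton]
              exact RayleighAux.not_indep_insert hclF (by simp [hgf])
            have hfwd : ∀ B : Finset α, M.IsBase (B : Set α) → g ∈ B → f ∉ B →
                M.IsBase ((insert f (B.erase g) : Finset α) : Set α) :=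
              fun B hb hgB hfB => RayleighAux.exchange_base hb hgB hfB hf hclF
                (Set.singleton_subset_iff.mpr (Set.mem_insert _ _))
            have hbwd : ∀ B : Finset α, M.IsBase (B : Set α) → f ∈ B → g ∉ B →
                M.IsBase ((insert g (B.erase f) : Finset α) : Set α) :=
              fun B hb hfB hgB => RayleighAux.exchange_base hb hfB hgB hgE hfcl
                (Set.singleton_subset_iff.mpr (Set.mem_insert _ _))
            have sw1 : B1 = A3 := by
              have h1 := RayleighAux.minorPoly_swap (M := M) (a := g) (b := f)
                (I := ({e} : Finset α)) (J := (∅ : Finset α)) hgf (by simp [hge])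
                (by simp [hef.symm]) (by simp) (by simp)
                (fun B hb hgB hfB hIB => hfwd B hb hgB hfB)
                (fun B hb hfB hgB hIB => hbwd B hb hfB hgB)
              rwa [show (insert f (∅ : Finset α)) = ({f} : Finset α) by simp,
                show (insert f ({e} : Finset α)) = ({e, f} : Finset α) by
                  rw [Finset.pair_comm]] at h1
            have sw4 : B4 = A2 := by
              have h1 := RayleighAux.minorPoly_swap (M := M) (a := g) (b := f)
                (I := (∅ : Finset α)) (J := ({e} : Finset α)) hgf (by simp) (by simp)
                (by simp [hge]) (by simp [hef.symm])
                (fun B hb hgB hfB hIB => hfwd B hb hgB hfB)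
                (fun B hb hfB hgB hIB => hbwd B hb hfB hgB)
              rwa [show (insert f (∅ : Finset α)) = ({f} : Finset α) by simp,
                show (insert f ({e} : Finset α)) = ({e, f} : Finset α) by
                  rw [Finset.pair_comm]] at h1
            have hz : A1 * B2 + B1 * A2 - A3 * B4 = 0 := by
              rw [z2, sw1, sw4]; ring
            constructor
            · simp [hz]
            · simp [z2]
          · -- {e, f, g} is a circuit-like case
            have hf' : f ∈ M.closure (insert g {e}) := by
              refine Matroid.mem_closure_insert hclE ?_
              rwa [Set.pair_comm] at hg
            have he' : e ∈ M.closure (insert g {f}) := by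
              refine Matroid.mem_closure_insert hclF ?_
              exact hg
            have sw1 : B1 = A3 := by
              have h1 := RayleighAux.minorPoly_swap (M := M) (a := g) (b := f)
                (I := ({e} : Finset α)) (J := (∅ : Finset α)) hgf (by simp [hge])
                (by simp [hef.symm]) (by simp) (by simp)
                (fun B hb hgB hfB hIB => RayleighAux.exchange_base hb hgB hfB hf hg
                  (by rintro w (rfl | rfl)
                      · exact Set.mem_insert_of_mem _
                          (RayleighAux.mem_coe_erase (hIB (Finset.mem_singleton_self _))
                            (fun h => hge h.symm))
                      · exact Set.mem_insert _ _))
                (fun B hb hfB hgB hIB => RayleighAux.exchange_base hb hfB hgB hgE hf'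
                  (by rintro w (rfl | rfl)
                      · exact Set.mem_insert _ _
                      · exact Set.mem_insert_of_mem _
                          (RayleighAux.mem_coe_erase (hIB (Finset.mem_singleton_self _))
                            hef)))
              rwa [show (insert f (∅ : Finset α)) = ({f} : Finset α) by simp,
                show (insert f ({e} : Finset α)) = ({e, f} : Finset α) by
                  rw [Finset.pair_comm]] at h1
            have sw2 : B2 = A3 := by
              have h1 := RayleighAux.minorPoly_swap (M := M) (a := g) (b := e)
                (I := ({f} : Finset α)) (J := (∅ : Finset α)) hge (by simp [hgf])
                (by simp [hef]) (by simp) (by simp)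
                (fun B hb hgB heB hIB => RayleighAux.exchange_base hb hgB heB he hg
                  (by rintro w (rfl | rfl)
                      · exact Set.mem_insert _ _
                      · exact Set.mem_insert_of_mem _
                          (RayleighAux.mem_coe_erase (hIB (Finset.mem_singleton_self _))
                            (fun h => hgf h.symm))))
                (fun B hb heB hgB hIB => RayleighAux.exchange_base hb heB hgB hgE he'
                  (by rintro w (rfl | rfl)
                      · exact Set.mem_insert _ _
                      · exact Set.mem_insert_of_mem _
                          (RayleighAux.mem_coe_erase (hIB (Finset.mem_singleton_self _))
                            hef.symm)))
              rwa [show (insert e (∅ : Finset α)) = ({e} : Finset α) by simp] at h1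
            have hineq : eval y B4 ≤ eval y A1 + eval y A2 := by
              have h1 := RayleighAux.eval_le_add he hf hef hge hgf hg hy'
              rwa [hB4, hins]
            have ha3 : 0 ≤ eval y A3 := RayleighAux.eval_minorPoly_nonneg M _ _ hy'
            constructor
            · rw [sw1, sw2]
              simp only [map_add, map_mul, map_sub]
              nlinarith [hineq, ha3]
            · rw [sw1, sw2, map_mul]
              exact mul_self_nonneg _
    obtain ⟨hth, hq⟩ := hmain
    have hyg : 0 < y g := hy g hgE
    have hfinal : 0 ≤ eval y (M.rayleighDiff e f) := by
      rw [hpoly]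
      simp only [map_add, map_mul, eval_X]
      have hq' : 0 ≤ eval y B1 * eval y B2 := by rw [← map_mul]; exact hq
      nlinarith [mul_nonneg hyg.le hth, mul_nonneg (mul_nonneg hyg.le hyg.le) hq', ha]
    linarith
  refine ⟨fun I0 X hIF hIX => ?_, hEef⟩
  refine hIX.subset_closure.trans ?_
  rw [hIF.closure_eq_closure]
  exact hclosure
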